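/- For each smooth F: ℝ → ℝ with F' nowhere zero and each constant C, the transformation Φ: (x,y,u,v) ↦ (x, y + C, F(u), v/F'(u) − 2(F''(u)/F'(u)²)x²) together with the replacement h ↦ h̃ given by h̃ = h/F'(u)² + ((2F'''(u)F'(u) − 3F''(u)²)/(8F'(u)⁴))x preserves the shape of the Kundt wave metric: the pullback of the metric g[h̃] under Φ equals g[h]. -/

import Mathlib

noncomputable section

/-- The Kundt wave metric
`g[h] = dx² + dy² − du (dv − (2v/x) dx + (8xh − v²/(4x²)) du)`
in coordinates `(x,y,u,v) = (p 0, p 1, p 2, p 3)`, as a symmetric matrix,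
with `h = h(x,y,u)`. -/
def gKW (h : (Fin 3 → ℝ) → ℝ) (p : Fin 4 → ℝ) : Matrix (Fin 4) (Fin 4) ℝ :=
  !![1, 0, p 3 / p 0, 0;
     0, 1, 0, 0;
     p 3 / p 0, 0, -(8 * p 0 * h ![p 0, p 1, p 2] - (p 3) ^ 2 / (4 * (p 0) ^ 2)), -(1/2);
     0, 0, -(1/2), 0]

/-- The metric `g[h]` as a bilinear form on tangent vectors at `p`. -/
def gB (h : (Fin 3 → ℝ) → ℝ) (p v w : Fin 4 → ℝ) : ℝ :=
  ∑ i, ∑ j, v i * gKW h p i j * w j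

/-- The shape-preserving transformation
`Φ : (x,y,u,v) ↦ (x, y + C, F(u), v/F'(u) − 2(F''(u)/F'(u)²)x²)`. -/
def Φ (F : ℝ → ℝ) (C : ℝ) (p : Fin 4 → ℝ) : Fin 4 → ℝ :=
  ![p 0, p 1 + C, F (p 2),
    p 3 / deriv F (p 2) - 2 * (deriv (deriv F) (p 2) / (deriv F (p 2)) ^ 2) * (p 0) ^ 2]

abbrev pr (i : Fin 4) : (Fin 4 → ℝ) →L[ℝ] ℝ := ContinuousLinearMap.proj i

lemma pr_hasFDerivAt (i : Fin 4) (p : Fin 4 → ℝ) :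
    HasFDerivAt (fun q : Fin 4 → ℝ => q i) (pr i) p := (pr i).hasFDerivAt

set_option maxHeartbeats 2000000 in
/-- For smooth `F` with nowhere vanishing `F'`, the transformation `Φ` together with
`h̃ = h/F'(u)² + ((2F'''(u)F'(u) − 3F''(u)²)/(8F'(u)⁴)) x` preserves the shape of the
Kundt wave metric: the pullback of `g[h̃]` under `Φ` equals `g[h]`. -/
theorem kundt_shape_preserving (F : ℝ → ℝ) (C : ℝ) (hF : ContDiff ℝ (⊤ : ℕ∞) F)
    (hF' : ∀ u, deriv F u ≠ 0)
    (h htil : (Fin 3 → ℝ) → ℝ) (hh : ContDiff ℝ (⊤ : ℕ∞) h)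
    (hrel : ∀ q : Fin 3 → ℝ,
      htil ![q 0, q 1 + C, F (q 2)] =
        h q / (deriv F (q 2)) ^ 2 +
          ((2 * deriv (deriv (deriv F)) (q 2) * deriv F (q 2)
              - 3 * (deriv (deriv F) (q 2)) ^ 2) / (8 * (deriv F (q 2)) ^ 4)) * q 0) :
    ∀ p : Fin 4 → ℝ, p 0 ≠ 0 → ∀ v w : Fin 4 → ℝ,
      gB htil (Φ F C p) (fderiv ℝ (Φ F C) p v) (fderiv ℝ (Φ F C) p w) = gB h p v w := by
  intro p hp v w
  have hF1 := (contDiff_infty_iff_deriv.mp (hF.of_le (by simp))).2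
  have hF2 := (contDiff_infty_iff_deriv.mp hF1).2
  have dF : HasDerivAt F (deriv F (p 2)) (p 2) := (hF.differentiable (by simp) (p 2)).hasDerivAt
  have dF1 : HasDerivAt (deriv F) (deriv (deriv F) (p 2)) (p 2) :=
    (hF1.differentiable (by simp) (p 2)).hasDerivAt
  have dF2 : HasDerivAt (deriv (deriv F)) (deriv (deriv (deriv F)) (p 2)) (p 2) :=
    (hF2.differentiable (by simp) (p 2)).hasDerivAt
  have h0 : HasFDerivAt (fun q : Fin 4 → ℝ => Φ F C q 0) (pr 0) p := by
    have e : (fun q : Fin 4 → ℝ => Φ F C q 0) = fun q => q 0 := by funext q; simp [Φ]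
    rw [e]; exact pr_hasFDerivAt 0 p
  have h1 : HasFDerivAt (fun q : Fin 4 → ℝ => Φ F C q 1) (pr 1) p := by
    have e : (fun q : Fin 4 → ℝ => Φ F C q 1) = fun q => q 1 + C := by funext q; simp [Φ]
    rw [e]; exact (pr_hasFDerivAt 1 p).add_const C
  have h2 : HasFDerivAt (fun q : Fin 4 → ℝ => Φ F C q 2)
      ((deriv F (p 2)) • pr 2) p := by
    have e : (fun q : Fin 4 → ℝ => Φ F C q 2) = fun q => F (q 2) := by funext q; simp [Φ]
    rw [e]; exact dF.comp_hasFDerivAt p (pr_hasFDerivAt 2 p)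
  have hinv : HasDerivAt (fun u => (deriv F u)⁻¹)
      (-(deriv (deriv F) (p 2)) / (deriv F (p 2)) ^ 2) (p 2) := dF1.inv (hF' _)
  have hinvc := hinv.comp_hasFDerivAt p (pr_hasFDerivAt 2 p)
  have hfirst := (pr_hasFDerivAt 3 p).mul hinvc
  have hφ : HasDerivAt (fun u => deriv (deriv F) u / (deriv F u) ^ 2)
      ((deriv (deriv (deriv F)) (p 2) * (deriv F (p 2)) ^ 2 -
        deriv (deriv F) (p 2) * (2 * deriv F (p 2) ^ 1 * deriv (deriv F) (p 2))) /
        ((deriv F (p 2)) ^ 2) ^ 2) (p 2) :=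
    dF2.div (dF1.pow 2) (pow_ne_zero 2 (hF' _))
  have hφc := (HasDerivAt.const_mul 2 hφ).comp_hasFDerivAt p (pr_hasFDerivAt 2 p)
  have hsq := (pr_hasFDerivAt 0 p).mul (pr_hasFDerivAt 0 p)
  have h3a := hφc.mul hsq
  have h3 := hfirst.sub h3a
  have h3' := h3.congr_of_eventuallyEq (Filter.Eventually.of_forall
    (fun q : Fin 4 → ℝ => show Φ F C q 3 = _ by
      simp only [Φ, Function.comp_apply, Matrix.cons_val', Matrix.cons_val_zero,
        Matrix.cons_val_one, Matrix.head_cons, Matrix.head_fin_const, Matrix.cons_val_fin_one,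
        Matrix.cons_val_two, Matrix.cons_val_three, Matrix.tail_cons,
        Pi.sub_apply, Pi.mul_apply, Pi.pow_apply]; ring))
  have hdiffAll : ∀ i, DifferentiableAt ℝ (fun q => Φ F C q i) p := by
    intro i; fin_cases i
    exacts [h0.differentiableAt, h1.differentiableAt, h2.differentiableAt, h3'.differentiableAt]
  have hpi : fderiv ℝ (Φ F C) p =
      ContinuousLinearMap.pi (fun i => fderiv ℝ (fun q => Φ F C q i) p) := fderiv_pi hdiffAll
  have hrel' := hrel ![p 0, p 1, p 2]
  simp only [Matrix.cons_val_zero, Matrix.cons_val_one, Matrix.head_cons,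
    Matrix.cons_val_two, Matrix.tail_cons] at hrel'
  have hA := hF' (p 2)
  simp only [gB, gKW, Fin.sum_univ_four, hpi, ContinuousLinearMap.pi_apply,
    h0.fderiv, h1.fderiv, h2.fderiv, h3'.fderiv,
    ContinuousLinearMap.add_apply, ContinuousLinearMap.sub_apply,
    ContinuousLinearMap.smul_apply, ContinuousLinearMap.proj_apply,
    Function.comp_apply, smul_eq_mul, Pi.mul_apply,
    Matrix.cons_val', Matrix.cons_val_zero, Matrix.cons_val_one, Matrix.head_cons,
    Matrix.head_fin_const, Matrix.cons_val_fin_one, Matrix.cons_val_two,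
    Matrix.cons_val_three, Matrix.tail_cons, Matrix.of_apply, Matrix.empty_val']
  simp only [Φ, Matrix.cons_val', Matrix.cons_val_zero, Matrix.cons_val_one, Matrix.head_cons,
    Matrix.head_fin_const, Matrix.cons_val_fin_one, Matrix.cons_val_two,
    Matrix.cons_val_three, Matrix.tail_cons, Matrix.of_apply, Matrix.empty_val', hrel']
  field_simp
  ring


end
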